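/- arXiv:2404.06669 — 2 statements merged into one kernel-verified Lean document; each statement's English description precedes it below -/
import Mathlib

section
/- Under assumptions (A1) o_k ∈ S(G_{k-1}) for all k ∈ {1,...,K} and (A2) Δ(O_k) ≤ f(o_k) for all k, the optimal value satisfies f(O_K) ≤ Σ_{k=1}^{K} max_{s ∈ S(G_{k-1})} f(s), and hence f(G_K)/f(O_K) ≥ β_2 := f(G_K) / Σ_{k=1}^{K} max_{s ∈ S(G_{k-1})} f(s). -/
/-- `T` is a prefix-closed collection of strings. -/
def PrefixClosed {σ : Type*} (T : Set (List σ)) : Prop :=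
  ∀ B ∈ T, ∀ A : List σ, A <+: B → A ∈ T

/-- `G` is a greedy solution of length `K` for maximizing `f` over `T`. -/
def IsGreedy {σ : Type*} (f : List σ → ℝ) (T : Set (List σ)) (G : List σ) (K : ℕ) : Prop :=
  G.length = K ∧ G ∈ T ∧
    ∀ k, 1 ≤ k → k ≤ K → ∀ s : σ, G.take (k - 1) ++ [s] ∈ T →
      f (G.take (k - 1) ++ [s]) ≤ f (G.take k)

/-- The greedy curvature `α_G`: the maximum over `k ∈ {2,…,K}` and feasible
continuations `s` with positive increment of `f([s]) / Δ(G_{k-1}s)`. -/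
noncomputable def greedyCurvature {σ : Type*} (f : List σ → ℝ) (T : Set (List σ))
    (G : List σ) (K : ℕ) : ℝ :=
  sSup { r : ℝ | ∃ k, 2 ≤ k ∧ k ≤ K ∧ ∃ s : σ, G.take (k - 1) ++ [s] ∈ T ∧
    0 < f (G.take (k - 1) ++ [s]) - f (G.take (k - 1)) ∧
    r = f [s] / (f (G.take (k - 1) ++ [s]) - f (G.take (k - 1))) }

/-- `max_{s ∈ S(G_{k-1})} f(s)`: the best single-symbol value among feasible
continuations of the greedy prefix of length `k - 1`. -/
noncomputable def maxStep {σ : Type*} (f : List σ → ℝ) (T : Set (List σ))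
    (G : List σ) (k : ℕ) : ℝ :=
  sSup { r : ℝ | ∃ s : σ, G.take (k - 1) ++ [s] ∈ T ∧ r = f [s] }

/-- under assumptions A1 and A2, the optimal value is bounded by the
sum of the best feasible single-symbol values along the greedy trajectory, and hence
`f(G_K)/f(O_K) ≥ β₂ = f(G_K) / Σ_{k=1}^K max_{s ∈ S(G_{k-1})} f(s)`. -/
theorem greedy_bound_beta2 {σ : Type*} [Fintype σ] (K : ℕ) (hK : 1 ≤ K)
    (T : Set (List σ)) (hT : PrefixClosed T) (hTlen : ∀ A ∈ T, A.length ≤ K)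
    (f : List σ → ℝ) (hf0 : f ([] : List σ) = 0) (hfnonneg : ∀ A ∈ T, 0 ≤ f A)
    (G : List σ) (hG : IsGreedy f T G K)
    (O : List σ) (hOT : O ∈ T) (hOlen : O.length = K)
    (hOopt : ∀ A ∈ T, f A ≤ f O) (hOpos : 0 < f O)
    -- A1: each optimal symbol is feasible after the corresponding greedy prefix
    (hA1 : ∀ k (hk : 1 ≤ k) (hkK : k ≤ K),
      G.take (k - 1) ++ [O.get ⟨k - 1, by omega⟩] ∈ T)
    -- A2: diminishing returns along the optimal string
    (hA2 : ∀ k (hk : 1 ≤ k) (hkK : k ≤ K),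
      f (O.take k) - f (O.take (k - 1)) ≤ f [O.get ⟨k - 1, by omega⟩]) :
    f O ≤ ∑ k ∈ Finset.Icc 1 K, maxStep f T G k ∧
      f G / (∑ k ∈ Finset.Icc 1 K, maxStep f T G k) ≤ f G / f O := by

  have key : ∀ k ∈ Finset.Icc 1 K, f (O.take k) - f (O.take (k - 1)) ≤ maxStep f T G k := by
    intro k hk
    rw [Finset.mem_Icc] at hk
    obtain ⟨hk1, hkK⟩ := hk
    have hklt : k - 1 < O.length := by omega
    have ho := hA1 k hk1 hkK
    have hmem : f [O.get ⟨k - 1, hklt⟩] ∈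
        { r : ℝ | ∃ s : σ, G.take (k - 1) ++ [s] ∈ T ∧ r = f [s] } :=
      ⟨O.get ⟨k - 1, hklt⟩, ho, rfl⟩
    have hbdd : BddAbove { r : ℝ | ∃ s : σ, G.take (k - 1) ++ [s] ∈ T ∧ r = f [s] } := by
      apply Set.Finite.bddAbove
      apply (Set.finite_range (fun s : σ => f [s])).subset
      rintro r ⟨s, _, rfl⟩
      exact ⟨s, rfl⟩
    calc f (O.take k) - f (O.take (k - 1)) ≤ f [O.get ⟨k - 1, hklt⟩] := hA2 k hk1 hkK
      _ ≤ maxStep f T G k := le_csSup hbdd hmem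
  have tel : ∑ k ∈ Finset.Icc 1 K, (f (O.take k) - f (O.take (k - 1))) = f O := by
    have : ∑ k ∈ Finset.Icc 1 K, (f (O.take k) - f (O.take (k - 1)))
        = ∑ i ∈ Finset.range K, (f (O.take (i + 1)) - f (O.take i)) := by
      rw [show Finset.Icc 1 K = Finset.Ico 1 (K + 1) from rfl, Finset.sum_Ico_eq_sum_range]
      simp only [Nat.add_sub_cancel]
      apply Finset.sum_congr rfl
      intro i _
      rw [show (1 + i - 1 : ℕ) = i from by omega, Nat.add_comm 1 i]
    rw [this, Finset.sum_range_sub (fun i => f (O.take i))]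
    simp [hf0, ← hOlen]
  have h1 : f O ≤ ∑ k ∈ Finset.Icc 1 K, maxStep f T G k := by
    rw [← tel]
    exact Finset.sum_le_sum key
  refine ⟨h1, ?_⟩
  have hfG : 0 ≤ f G := hfnonneg G hG.2.1
  exact div_le_div_of_nonneg_left hfG hOpos h1
end

section
/- For the task-scheduling objective f(A) = 1 − Π_{k=1}^{|A|}(1 − p_k(a_k)) with all p_k(i) ∈ [0,1], the increment upon appending agent s satisfies the diminishing-returns property along prefixes: if A ⪯ B (A is a prefix of B with |A| = m, |B| = n, m ≤ n) and appending s at stage m+1 to A and at stage n+1 to B both use probabilities p_{m+1}(s) and p_{n+1}(s) with p_{m+1}(s) ≥ p_{n+1}(s), then f(As) − f(A) ≥ f(Bs) − f(B). -/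
/-! The gain of appending `s` to `A` is `p_{|A|+1}(s)` times the probability that every agent
of `A` fails. Along a prefix chain `A ⪯ B` that failure probability can only shrink, since it
picks up further factors in `[0, 1]`, and the stage probability shrinks by hypothesis. -/

/-- The task-scheduling objective: for a string `A` of agent indices, where the `k`-th
selected agent acts at stage `k` (stages numbered from 1) and `p k i` is the success
probability of agent `i` at stage `k`,
`f(A) = 1 − Π_{k=1}^{|A|} (1 − p k (a_k))`. -/
def taskF {ι : Type*} (p : ℕ → ι → ℝ) (A : List ι) : ℝ :=
  1 - ∏ k : Fin A.length, (1 - p (k.1 + 1) (A.get k))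

section TaskFailure

variable {ι : Type*} (p : ℕ → ι → ℝ)

def taskFailureProb (A : List ι) : ℝ :=
  ∏ k : Fin A.length, (1 - p (k.1 + 1) (A.get k))

theorem taskF_eq_one_sub_taskFailureProb (A : List ι) :
    taskF p A = 1 - taskFailureProb p A := rfl

theorem taskFailureProb_append (A U : List ι) :
    taskFailureProb p (A ++ U) =
      taskFailureProb p A * ∏ k : Fin U.length, (1 - p (A.length + k.1 + 1) (U.get k)) := by
  unfold taskFailureProb
  rw [← Fin.prod_congr' _ (List.length_append (as := A) (bs := U)).symm, Fin.prod_univ_add]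
  congr 1 <;> refine Finset.prod_congr rfl fun k _ => ?_
  · simp [List.getElem_append_left]
  · simp [List.getElem_append_right, add_assoc]

theorem taskFailureProb_append_singleton (A : List ι) (s : ι) :
    taskFailureProb p (A ++ [s]) = taskFailureProb p A * (1 - p (A.length + 1) s) := by
  simp [taskFailureProb_append]

theorem taskF_append_singleton_sub (A : List ι) (s : ι) :
    taskF p (A ++ [s]) - taskF p A = taskFailureProb p A * p (A.length + 1) s := by
  simp only [taskF_eq_one_sub_taskFailureProb, taskFailureProb_append_singleton]
  ring

theorem taskFailureProb_nonneg (hp : ∀ k i, p k i ≤ 1) (A : List ι) :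
    0 ≤ taskFailureProb p A :=
  Finset.prod_nonneg fun _ _ => sub_nonneg.2 (hp _ _)

theorem taskFailureProb_le_of_prefix (hp : ∀ k i, 0 ≤ p k i ∧ p k i ≤ 1) {A B : List ι}
    (hAB : A <+: B) : taskFailureProb p B ≤ taskFailureProb p A := by
  obtain ⟨U, rfl⟩ := hAB
  rw [taskFailureProb_append]
  refine mul_le_of_le_one_right (taskFailureProb_nonneg p (fun k i => (hp k i).2) A) ?_
  exact Finset.prod_le_one (fun _ _ => sub_nonneg.2 (hp _ _).2)
    (fun _ _ => sub_le_self _ (hp _ _).1)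

end TaskFailure

/-- diminishing returns along prefixes for the task-scheduling objective:
if `A` is a prefix of `B` and appending agent `s` uses stage probabilities with
`p_{|A|+1}(s) ≥ p_{|B|+1}(s)`, then `f(As) − f(A) ≥ f(Bs) − f(B)`. -/
theorem taskF_diminishing_returns {ι : Type*} (p : ℕ → ι → ℝ)
    (hp : ∀ k i, 0 ≤ p k i ∧ p k i ≤ 1)
    (A B : List ι) (hAB : A <+: B) (s : ι)
    (hps : p (B.length + 1) s ≤ p (A.length + 1) s) :
    taskF p (B ++ [s]) - taskF p B ≤ taskF p (A ++ [s]) - taskF p A := by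
  rw [taskF_append_singleton_sub, taskF_append_singleton_sub]
  exact mul_le_mul (taskFailureProb_le_of_prefix p hp hAB) hps (hp _ _).1
    (taskFailureProb_nonneg p (fun k i => (hp k i).2) A)
end
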